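/- For every g̃ ∈ G₂, the map Φ_{g̃} is an automorphism of the I-system G₂'. -/

import Mathlib

universe u

section GoursatSetup

variable {G₁ G₂ : Type u} [Group G₁] [Group G₂]

/-- `π₁(H)`, the projection of `H` to the first factor. -/
def projFst (H : Subgroup (G₁ × G₂)) : Subgroup G₁ := H.map (MonoidHom.fst G₁ G₂)

/-- `π₂(H)`, the projection of `H` to the second factor. -/
def projSnd (H : Subgroup (G₁ × G₂)) : Subgroup G₂ := H.map (MonoidHom.snd G₁ G₂)

/-- `ι₁⁻¹(H) = {g ∈ G₁ | (g, e) ∈ H}`. -/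
def kerFst (H : Subgroup (G₁ × G₂)) : Subgroup G₁ := H.comap (MonoidHom.inl G₁ G₂)

/-- `ι₂⁻¹(H) = {g ∈ G₂ | (e, g) ∈ H}`. -/
def kerSnd (H : Subgroup (G₁ × G₂)) : Subgroup G₂ := H.comap (MonoidHom.inr G₁ G₂)

theorem kerFst_le_projFst (H : Subgroup (G₁ × G₂)) : kerFst H ≤ projFst H :=
  fun g hg => ⟨(g, 1), hg, rfl⟩

theorem kerSnd_le_projSnd (H : Subgroup (G₁ × G₂)) : kerSnd H ≤ projSnd H :=
  fun g hg => ⟨(1, g), hg, rfl⟩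

/-- `ι₁⁻¹(H)` is a normal subgroup of `π₁(H)`. -/
instance kerFst_normal (H : Subgroup (G₁ × G₂)) :
    ((kerFst H).subgroupOf (projFst H)).Normal := by
  constructor
  intro n hn g
  rw [Subgroup.mem_subgroupOf] at hn ⊢
  obtain ⟨x, hxH, hx⟩ := g.2
  have key : x * (((n : G₁), 1) : G₁ × G₂) * x⁻¹ ∈ H :=
    mul_mem (mul_mem hxH hn) (inv_mem hxH)
  have : x * (((n : G₁), 1) : G₁ × G₂) * x⁻¹ = (((g * n * g⁻¹ : projFst H) : G₁), 1) := by
    ext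
    · simp [← hx]
    · simp
  rwa [this] at key

/-- `ι₂⁻¹(H)` is a normal subgroup of `π₂(H)`. -/
instance kerSnd_normal (H : Subgroup (G₁ × G₂)) :
    ((kerSnd H).subgroupOf (projSnd H)).Normal := by
  constructor
  intro n hn g
  rw [Subgroup.mem_subgroupOf] at hn ⊢
  obtain ⟨x, hxH, hx⟩ := g.2
  have key : x * ((1, (n : G₂)) : G₁ × G₂) * x⁻¹ ∈ H :=
    mul_mem (mul_mem hxH hn) (inv_mem hxH)
  have : x * ((1, (n : G₂)) : G₁ × G₂) * x⁻¹ = (1, ((g * n * g⁻¹ : projSnd H) : G₂)) := by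
    ext
    · simp
    · simp [← hx]
  rwa [this] at key

/-- The quotient `V₁ = π₁(H)/ι₁⁻¹(H)`. -/
abbrev QuotFst (H : Subgroup (G₁ × G₂)) := projFst H ⧸ (kerFst H).subgroupOf (projFst H)

/-- The quotient `π₂(H)/ι₂⁻¹(H)`. -/
abbrev QuotSnd (H : Subgroup (G₁ × G₂)) := projSnd H ⧸ (kerSnd H).subgroupOf (projSnd H)

/-- The vertex set of the auxiliary system `G_{ι₁}` : it is `V₁` if `π₁(H) = G₁`
(the extra summand is then empty) and `V₁ ⊔ {s}` otherwise. -/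
abbrev AuxVert (H : Subgroup (G₁ × G₂)) := QuotFst H ⊕ PLift (projFst H ≠ ⊤)

/-- The auxiliary binary relational system `G_{ι₁}` over the label set
`I₁ = I_{ι₁} ⊔ (J₁ \ {0})`. -/
def auxRel (H : Subgroup (G₁ × G₂)) {Iι J₁ : Type u} (j₁0 : J₁) (r : J₁ → G₁) :
    (Iι ⊕ {j : J₁ // j ≠ j₁0}) → AuxVert H → AuxVert H → Prop
  | _,      .inr _, .inr _ => True
  | .inl _, .inl a, .inl b => b = a
  | .inr j, .inl a, .inl b =>
      ∃ h : r j.val ∈ projFst H, b = QuotientGroup.mk ⟨r j.val, h⟩ * a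
  | .inl _, .inl _, .inr _ => False
  | .inl _, .inr _, .inl _ => False
  | .inr j, .inl _, .inr _ => r j.val ∉ projFst H
  | .inr j, .inr _, .inl _ => r j.val ∉ projFst H

/-- The generating family `R = (r_i)_{i ∈ I₁}` of `G₁`. -/
def cayGenFst (H : Subgroup (G₁ × G₂)) {Iι J₁ : Type u} (rι : Iι → kerFst H) (j₁0 : J₁)
    (r : J₁ → G₁) : (Iι ⊕ {j : J₁ // j ≠ j₁0}) → G₁
  | .inl i => (rι i : G₁)
  | .inr j => r j.val

/-- The Cayley diagram `Cay(G₁, R)` as an `I₁`-system. -/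
def cayRelFst (H : Subgroup (G₁ × G₂)) {Iι J₁ : Type u} (rι : Iι → kerFst H) (j₁0 : J₁)
    (r : J₁ → G₁) (i : Iι ⊕ {j : J₁ // j ≠ j₁0}) (g g' : G₁) : Prop :=
  g' = cayGenFst H rι j₁0 r i * g

/-- The map `φ₀ : G₁ → V(G_{ι₁})`, sending `g` to `[g]` if `g ∈ π₁(H)` and to `s`
otherwise. -/
noncomputable def phiZero (H : Subgroup (G₁ × G₂)) (g : G₁) : AuxVert H :=
  letI := Classical.dec (g ∈ projFst H)
  if h : g ∈ projFst H then .inl (QuotientGroup.mk ⟨g, h⟩)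
  else .inr ⟨fun hP => h (by rw [hP]; exact Subgroup.mem_top g)⟩

end GoursatSetup

section MainSystem

variable {G₁ G₂ : Type u} [Group G₁] [Group G₂]

/-- The vertex set of the system `G₂'`: `G₂ ⊔ (⊔_{j ∈ J₂} V₂ʲ)` with
`V₂ʲ = {j} × V(G_{ι₁})`. -/
abbrev MainVert (H : Subgroup (G₁ × G₂)) (J₂ : Type u) := G₂ ⊕ (J₂ × AuxVert H)

/-- The full label set `I = I₁ ⊔ I₂ ⊔ {θ}`. -/
abbrev FullLabel (Iι J₁ Iπ J₂ : Type u) (j₁0 : J₁) (j₂0 : J₂) :=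
  (Iι ⊕ {j : J₁ // j ≠ j₁0}) ⊕ ((Iπ ⊕ {j : J₂ // j ≠ j₂0}) ⊕ PUnit.{u + 1})

/-- The generating family `S = (s_i)_{i ∈ I₂}` of `G₂`. -/
def cayGenSnd (H : Subgroup (G₁ × G₂)) {Iπ J₂ : Type u} (sπ : Iπ → projSnd H) (j₂0 : J₂)
    (s : J₂ → G₂) : (Iπ ⊕ {j : J₂ // j ≠ j₂0}) → G₂
  | .inl i => (sπ i : G₂)
  | .inr j => s j.val

/-- The binary relational system `G₂'` over the label set `I = I₁ ⊔ I₂ ⊔ {θ}`. -/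
def mainRel (H : Subgroup (G₁ × G₂)) {Iι J₁ Iπ J₂ : Type u} (j₁0 : J₁) (r : J₁ → G₁)
    (sπ : Iπ → projSnd H) (j₂0 : J₂) (s : J₂ → G₂)
    (k₂ : G₂ → projSnd H) (jj₂ : G₂ → J₂) (θ : QuotFst H ≃* QuotSnd H) :
    FullLabel Iι J₁ Iπ J₂ j₁0 j₂0 → MainVert H J₂ → MainVert H J₂ → Prop
  | .inl i₁, .inr (j, v), .inr (j', v') => j' = j ∧ auxRel H j₁0 r i₁ v v'
  | .inr (.inl i₂), .inl g, .inl g' => g' = cayGenSnd H sπ j₂0 s i₂ * g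
  | .inr (.inr _), .inl g, .inr (j, v) =>
      j = jj₂ g ∧ v = .inl (θ.symm (QuotientGroup.mk (k₂ g)))
  | _, _, _ => False

/-- The self-map `Φ_{g̃}` of the vertex set of `G₂'` induced by `g̃ ∈ G₂`. -/
def mainPhi (H : Subgroup (G₁ × G₂)) {J₂ : Type u} (s : J₂ → G₂)
    (k₂ : G₂ → projSnd H) (jj₂ : G₂ → J₂) (θ : QuotFst H ≃* QuotSnd H)
    (gt : G₂) : MainVert H J₂ → MainVert H J₂
  | .inl g => .inl (g * gt⁻¹)
  | .inr (j, .inl a) =>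
      .inr (jj₂ (s j * gt⁻¹),
        .inl (a * θ.symm (QuotientGroup.mk (k₂ (s j * gt⁻¹)))))
  | .inr (j, .inr u) => .inr (jj₂ (s j * gt⁻¹), .inr u)

/-- The Cayley diagram `Cay(G₁, R)` viewed as an `I`-system over the full label set,
with no edges of label outside `I₁`. -/
def cayRelFull (H : Subgroup (G₁ × G₂)) {Iι J₁ Iπ J₂ : Type u} (rι : Iι → kerFst H)
    (j₁0 : J₁) (r : J₁ → G₁) (j₂0 : J₂) :
    FullLabel Iι J₁ Iπ J₂ j₁0 j₂0 → G₁ → G₁ → Prop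
  | .inl i₁ => fun g g' => g' = cayGenFst H rι j₁0 r i₁ * g
  | .inr _ => fun _ _ => False

/-- The morphism `φ' : Cay(G₁, R) → G₂'`, `φ'(g) = (0, φ₀(g))`. -/
noncomputable def mainArrow (H : Subgroup (G₁ × G₂)) {J₂ : Type u} (j₂0 : J₂) (g : G₁) :
    MainVert H J₂ :=
  .inr (j₂0, phiZero H g)

end MainSystem

/-- The automorphism group of a binary relational system `R` over a label set `I`,
as a subgroup of the permutations of the vertex set. -/
def relAut {I V : Type*} (R : I → V → V → Prop) : Subgroup (Equiv.Perm V) where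
  carrier := {e | ∀ i v w, R i v w ↔ R i (e v) (e w)}
  one_mem' := by intro i v w; simp
  mul_mem' := by
    intro a b ha hb i v w
    simpa [Equiv.Perm.mul_apply] using (hb i v w).trans (ha i (b v) (b w))
  inv_mem' := by
    intro a ha i v w
    have h := (ha i (a⁻¹ v) (a⁻¹ w)).symm
    rwa [show a (a⁻¹ v) = v from Equiv.apply_symm_apply a v,
      show a (a⁻¹ w) = w from Equiv.apply_symm_apply a w] at h

/-!
The maps `Φ_a` form a left action of `G₂` on the vertices: `Φ_a ∘ Φ_b = Φ_{ab}` and `Φ_1 = id`.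
Both facts, and the preservation of `θ`-edges, come from the cocycle identity of the
decomposition `g = k₂(g) s_{j₂(g)}`:
`k₂(g a) = k₂(g) k₂(s_{j₂(g)} a)` and `j₂(g a) = j₂(s_{j₂(g)} a)`.
Edges inside a layer `V₂ʲ` survive because right multiplication on `V₁` commutes with the left
multiplications defining them. So every `Φ_a` is a bijective morphism whose inverse `Φ_{a⁻¹}` is
again a morphism.
-/

theorem mem_relAut_of_map_rel {I V G : Type*} [Group G] {R : I → V → V → Prop}
    (ρ : G →* Equiv.Perm V) (hρ : ∀ a i v w, R i v w → R i (ρ a v) (ρ a w)) (a : G) :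
    ρ a ∈ relAut R := by
  intro i v w
  refine ⟨hρ a i v w, fun h => ?_⟩
  simpa [← Equiv.Perm.mul_apply, ← map_mul] using hρ a⁻¹ i _ _ h

section TransversalDecomp

variable {G J : Type*} [Group G] {P : Subgroup G} {s : J → G} {k : G → P} {jj : G → J}

theorem decomp_rep
    (huniq : ∀ (g : G) (κ : P) (l : J), (κ : G) * s l = g → κ = k g ∧ l = jj g) (j : J) :
    k (s j) = 1 ∧ jj (s j) = j := by
  obtain ⟨hk, hj⟩ := huniq (s j) 1 j (one_mul _)
  exact ⟨hk.symm, hj.symm⟩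

theorem decomp_mul (hdec : ∀ g : G, (k g : G) * s (jj g) = g)
    (huniq : ∀ (g : G) (κ : P) (l : J), (κ : G) * s l = g → κ = k g ∧ l = jj g) (g a : G) :
    k (g * a) = k g * k (s (jj g) * a) ∧ jj (g * a) = jj (s (jj g) * a) := by
  obtain ⟨hk, hj⟩ := huniq (g * a) (k g * k (s (jj g) * a)) (jj (s (jj g) * a)) (by
    rw [Subgroup.coe_mul, mul_assoc, hdec, ← mul_assoc, hdec])
  exact ⟨hk.symm, hj.symm⟩

end TransversalDecomp

section MainPhi

variable {G₁ G₂ : Type u} [Group G₁] [Group G₂] {H : Subgroup (G₁ × G₂)} {J₂ : Type u}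
  {s : J₂ → G₂} {k₂ : G₂ → projSnd H} {jj₂ : G₂ → J₂} {θ : QuotFst H ≃* QuotSnd H}

theorem auxRel_mul_right {Iι J₁ : Type u} {j₁0 : J₁} {r : J₁ → G₁} (c : QuotFst H)
    {i : Iι ⊕ {j : J₁ // j ≠ j₁0}} {v w : AuxVert H} (h : auxRel H j₁0 r i v w) :
    auxRel H j₁0 r i (Sum.map (· * c) id v) (Sum.map (· * c) id w) := by
  rcases i with i | i <;> rcases v with a | _ <;> rcases w with b | _ <;>
    simp only [auxRel, Sum.map_inl, Sum.map_inr] at h ⊢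
  · rw [h]
  · obtain ⟨hr, rfl⟩ := h
    exact ⟨hr, mul_assoc _ _ _⟩
  all_goals assumption

theorem mainPhi_inr (gt : G₂) (j : J₂) (v : AuxVert H) :
    mainPhi H s k₂ jj₂ θ gt (.inr (j, v)) =
      .inr (jj₂ (s j * gt⁻¹), Sum.map (· * θ.symm (QuotientGroup.mk (k₂ (s j * gt⁻¹)))) id v) := by
  cases v <;> rfl

theorem mainPhi_one
    (huniq : ∀ (g : G₂) (κ : projSnd H) (l : J₂), (κ : G₂) * s l = g → κ = k₂ g ∧ l = jj₂ g) :
    mainPhi H s k₂ jj₂ θ 1 = id := by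
  funext v
  rcases v with g | ⟨j, v⟩
  · simp [mainPhi]
  · obtain ⟨hk, hj⟩ := decomp_rep huniq j
    rw [mainPhi_inr, inv_one, mul_one, hk, hj]
    cases v <;> simp

theorem mainPhi_mul (hdec : ∀ g : G₂, (k₂ g : G₂) * s (jj₂ g) = g)
    (huniq : ∀ (g : G₂) (κ : projSnd H) (l : J₂), (κ : G₂) * s l = g → κ = k₂ g ∧ l = jj₂ g)
    (a b : G₂) (v : MainVert H J₂) :
    mainPhi H s k₂ jj₂ θ a (mainPhi H s k₂ jj₂ θ b v) = mainPhi H s k₂ jj₂ θ (a * b) v := by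
  rcases v with g | ⟨j, v⟩
  · simp [mainPhi, mul_assoc]
  · obtain ⟨hk, hj⟩ := decomp_mul hdec huniq (s j * b⁻¹) a⁻¹
    rw [mainPhi_inr, mainPhi_inr, mainPhi_inr, mul_inv_rev, ← mul_assoc, hk, hj]
    cases v <;> simp [mul_assoc]

def mainPhiHom (hdec : ∀ g : G₂, (k₂ g : G₂) * s (jj₂ g) = g)
    (huniq : ∀ (g : G₂) (κ : projSnd H) (l : J₂), (κ : G₂) * s l = g → κ = k₂ g ∧ l = jj₂ g) :
    G₂ →* Equiv.Perm (MainVert H J₂) where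
  toFun a :=
    { toFun := mainPhi H s k₂ jj₂ θ a
      invFun := mainPhi H s k₂ jj₂ θ a⁻¹
      left_inv v := by rw [mainPhi_mul hdec huniq, inv_mul_cancel, mainPhi_one huniq, id]
      right_inv v := by rw [mainPhi_mul hdec huniq, mul_inv_cancel, mainPhi_one huniq, id] }
  map_one' := Equiv.ext fun v => congrFun (mainPhi_one huniq) v
  map_mul' a b := Equiv.ext fun v => (mainPhi_mul hdec huniq a b v).symm

theorem mainRel_mainPhi {Iι J₁ Iπ : Type u} {j₁0 : J₁} {r : J₁ → G₁} {sπ : Iπ → projSnd H}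
    {j₂0 : J₂} (hdec : ∀ g : G₂, (k₂ g : G₂) * s (jj₂ g) = g)
    (huniq : ∀ (g : G₂) (κ : projSnd H) (l : J₂), (κ : G₂) * s l = g → κ = k₂ g ∧ l = jj₂ g)
    (gt : G₂) (i : FullLabel Iι J₁ Iπ J₂ j₁0 j₂0) (v w : MainVert H J₂)
    (h : mainRel H j₁0 r sπ j₂0 s k₂ jj₂ θ i v w) :
    mainRel H j₁0 r sπ j₂0 s k₂ jj₂ θ i (mainPhi H s k₂ jj₂ θ gt v)
      (mainPhi H s k₂ jj₂ θ gt w) := by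
  rcases i with i₁ | i₂ | _ <;> rcases v with g | ⟨j, v⟩ <;> rcases w with g' | ⟨j', w⟩ <;>
    simp only [mainRel] at h
  · obtain ⟨rfl, h⟩ := h
    rw [mainPhi_inr, mainPhi_inr]
    exact ⟨rfl, auxRel_mul_right _ h⟩
  · simp only [mainPhi, mainRel, h, mul_assoc]
  · obtain ⟨rfl, rfl⟩ := h
    obtain ⟨hk, hj⟩ := decomp_mul hdec huniq g gt⁻¹
    rw [mainPhi_inr]
    simp only [mainPhi, mainRel, Sum.map_inl, hk, hj, QuotientGroup.mk_mul, map_mul, and_self]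

end MainPhi

theorem mainPhi_is_automorphism_general {G₁ G₂ : Type u} [Group G₁] [Group G₂]
    (H : Subgroup (G₁ × G₂)) {Iι J₁ Iπ J₂ : Type u}
    (j₁0 : J₁) (r : J₁ → G₁)
    (sπ : Iπ → projSnd H) (j₂0 : J₂) (s : J₂ → G₂)
    (k₂ : G₂ → projSnd H) (jj₂ : G₂ → J₂) (θ : QuotFst H ≃* QuotSnd H)
    (hdec : ∀ g : G₂, (k₂ g : G₂) * s (jj₂ g) = g)
    (huniq : ∀ (g : G₂) (κ : projSnd H) (l : J₂), (κ : G₂) * s l = g → κ = k₂ g ∧ l = jj₂ g)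
    (gt : G₂) :
    ∃ e : relAut (mainRel H (Iι := Iι) j₁0 r sπ j₂0 s k₂ jj₂ θ),
      ⇑(e : Equiv.Perm (MainVert H J₂)) = mainPhi H s k₂ jj₂ θ gt :=
  ⟨⟨mainPhiHom hdec huniq gt, mem_relAut_of_map_rel _ (mainRel_mainPhi hdec huniq) gt⟩, rfl⟩

/-- For every `g̃ ∈ G₂`, the map `Φ_{g̃}` is an automorphism of the `I`-system `G₂'`. -/
theorem mainPhi_is_automorphism {G₁ G₂ : Type u} [Group G₁] [Group G₂]
    (H : Subgroup (G₁ × G₂)) {Iι J₁ Iπ J₂ : Type u}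
    (rι : Iι → kerFst H) (j₁0 : J₁) (r : J₁ → G₁)
    (sπ : Iπ → projSnd H) (j₂0 : J₂) (s : J₂ → G₂)
    (k₂ : G₂ → projSnd H) (jj₂ : G₂ → J₂) (θ : QuotFst H ≃* QuotSnd H)
    (hr0 : r j₁0 = 1)
    (hcos : ∀ g : G₁, ∃! j : J₁, g * (r j)⁻¹ ∈ kerFst H)
    (hKgen : Subgroup.closure (Set.range fun i => ((rι i : G₁))) = kerFst H)
    (hs0 : s j₂0 = 1)
    (hPgen : Subgroup.closure (Set.range fun i => ((sπ i : G₂))) = projSnd H)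
    (hdec : ∀ g : G₂, (k₂ g : G₂) * s (jj₂ g) = g)
    (huniq : ∀ (g : G₂) (κ : projSnd H) (l : J₂), (κ : G₂) * s l = g → κ = k₂ g ∧ l = jj₂ g)
    (hθ : ∀ (x : projFst H) (y : projSnd H),
      θ (QuotientGroup.mk x) = QuotientGroup.mk y ↔ ((x : G₁), (y : G₂)) ∈ H)
    (gt : G₂) :
    ∃ e : relAut (mainRel H (Iι := Iι) j₁0 r sπ j₂0 s k₂ jj₂ θ),
      ⇑(e : Equiv.Perm (MainVert H J₂)) = mainPhi H s k₂ jj₂ θ gt :=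
  mainPhi_is_automorphism_general H j₁0 r sπ j₂0 s k₂ jj₂ θ hdec huniq gt
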